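/- Let G be a graph obtained from a graph G1 and a triangle (3-cycle) G2 by gluing them along an edge, and suppose G1 has a NAC-colouring c1. Then the colouring of G that agrees with c1 on G1 and colours both new edges of the triangle with the colour c1 gives to the shared edge is a NAC-colouring of G. -/

import Mathlib

/-!
A cycle of the glued graph that avoids the new vertex is a cycle of `G1`, coloured as by `c1`.
A cycle through the new vertex runs `u`, new vertex, `v`, and then back along a path `r` of `G1`,
and both new edges get the colour `k` of `uv`. If `r` is the edge `uv` itself, the cycle is the
monochromatic triangle. Otherwise `r` closed up by `uv` is a cycle of `G1`, which has the same
number of edges of the other colour and one fewer edge of colour `k`; as it contains `uv`, it has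
at least one edge of colour `k`, so the glued cycle has at least two.
-/

open scoped Classical

namespace NAC

variable {V : Type*}

/-- Number of edges of `G` in the list `l` whose colour under `c` is `b`. -/
noncomputable def cCount (G : SimpleGraph V) (c : G.edgeSet → Bool) (b : Bool)
    (l : List (Sym2 V)) : ℕ :=
  (l.filter fun e => decide (∃ h : e ∈ G.edgeSet, c ⟨e, h⟩ = b)).length

/-- `c` is a NAC-colouring of `G`: it is surjective (both colours are used) and no
cycle of `G` contains exactly one edge of either colour. -/
def IsNAC (G : SimpleGraph V) (c : G.edgeSet → Bool) : Prop :=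
  Function.Surjective c ∧
  ∀ ⦃u : V⦄ (w : G.Walk u u), w.IsCycle →
    cCount G c true w.edges ≠ 1 ∧ cCount G c false w.edges ≠ 1

/-- The number of NAC-colourings of `G`, divided by two. -/
noncomputable def nacNum (G : SimpleGraph V) : ℕ :=
  {c : G.edgeSet → Bool | IsNAC G c}.ncard / 2

end NAC

namespace NAC

/-- The graph obtained from `G1` by gluing a triangle along the edge `uv`: a new vertex
(`none`) is added, adjacent to `u` and `v`. -/
def glueTri (G1 : SimpleGraph V) (u v : V) : SimpleGraph (Option V) where
  Adj x y :=
    match x, y with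
    | some a, some b => G1.Adj a b
    | some a, none => a = u ∨ a = v
    | none, some b => b = u ∨ b = v
    | none, none => False
  symm := by
    refine ⟨?_⟩
    rintro (_ | a) (_ | b) h
    · exact h
    · exact h
    · exact h
    · exact h.symm
  loopless := by
    refine ⟨?_⟩
    rintro (_ | a) h
    · exact h
    · exact G1.irrefl h

end NAC

namespace SimpleGraph.Walk

variable {V : Type*} {G : SimpleGraph V}

lemma IsPath.edges_eq_singleton {a b : V} {p : G.Walk a b} (hp : p.IsPath)
    (h : s(a, b) ∈ p.edges) : p.edges = [s(a, b)] := by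
  cases p with
  | nil => simp at h
  | @cons _ x _ hax q =>
    rw [cons_isPath_iff] at hp
    rw [edges_cons, List.mem_cons] at h
    rcases h with h | h
    · obtain rfl : b = x := by simpa [hax.ne] using h
      simpa using isPath_iff_nil.mp hp.1
    · exact absurd (fst_mem_support_of_mem_edges q h) hp.2

lemma IsCycle.exists_edges_perm {z : V} {w : G.Walk z z} (hw : w.IsCycle) :
    ∃ (x y : V) (_ : G.Adj z x) (_ : G.Adj z y) (r : G.Walk x y), r.IsPath ∧ z ∉ r.support ∧
      x ≠ y ∧ w.edges.Perm (s(z, x) :: s(z, y) :: r.edges) := by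
  cases w with
  | nil => exact absurd rfl hw.ne_nil
  | @cons _ x _ hx p =>
    obtain ⟨y, hy, r, hpr⟩ := exists_eq_cons_of_ne hx.ne p.reverse
    have hpath : (cons hy r).IsPath := hpr ▸ ((cons_isCycle_iff p hx).mp hw).1.reverse
    rw [cons_isPath_iff] at hpath
    have hperm : (cons hx p).edges.Perm (s(z, x) :: s(z, y) :: r.reverse.edges) := by
      have := congrArg edges hpr
      rw [edges_reverse, edges_cons] at this
      rw [edges_cons, edges_reverse]
      refine .cons _ ((List.reverse_perm _).symm.trans ?_)
      rw [this]
      exact .cons _ (List.reverse_perm _).symm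
    refine ⟨x, y, hx, hy, r.reverse, hpath.1.reverse, by simpa using hpath.2, ?_, hperm⟩
    rintro rfl
    simpa using hperm.nodup_iff.mp hw.edges_nodup

end SimpleGraph.Walk

namespace NAC

open SimpleGraph

variable {V W : Type*}

section cCount

variable {G : SimpleGraph V} (c : G.edgeSet → Bool) (b : Bool)

lemma cCount_nil : cCount G c b [] = 0 := rfl

lemma cCount_cons {e : Sym2 V} (he : e ∈ G.edgeSet) (l : List (Sym2 V)) :
    cCount G c b (e :: l) = (if c ⟨e, he⟩ = b then 1 else 0) + cCount G c b l := by
  by_cases hb : c ⟨e, he⟩ = b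
  · simp [cCount, he, hb, Nat.add_comm]
  · simp [cCount, he, hb]

lemma cCount_perm {l l' : List (Sym2 V)} (h : l.Perm l') : cCount G c b l = cCount G c b l' :=
  (h.filter _).length_eq

lemma cCount_map_edges {G' : SimpleGraph W} (f : G →g G') {c' : G'.edgeSet → Bool}
    (hc : ∀ e, c' (f.mapEdgeSet e) = c e) {x y : V} (p : G.Walk x y) :
    cCount G' c' b (p.map f).edges = cCount G c b p.edges := by
  rw [cCount, cCount, Walk.edges_map, List.filter_map, List.length_map]
  congr 1
  refine List.filter_congr fun e he => ?_
  have he' := p.edges_subset_edgeSet he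
  simp only [Function.comp_apply, exists_prop_of_true he',
    exists_prop_of_true (f.map_mem_edgeSet he'), ← hc ⟨e, he'⟩]
  rfl

end cCount

lemma IsNAC.cCount_ne_one {G : SimpleGraph V} {c : G.edgeSet → Bool} (hc : IsNAC G c) {z : V}
    {w : G.Walk z z} (hw : w.IsCycle) (b : Bool) : cCount G c b w.edges ≠ 1 := by
  cases b
  exacts [(hc.2 w hw).2, (hc.2 w hw).1]

lemma cCount_ne_one_of_support_subset_range {G : SimpleGraph V} {G' : SimpleGraph W}
    (f : G ↪g G') {c : G.edgeSet → Bool} (hc : IsNAC G c) {c' : G'.edgeSet → Bool}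
    (hc' : ∀ e, c' (f.toHom.mapEdgeSet e) = c e) {z : W} {w : G'.Walk z z} (hw : w.IsCycle)
    (hsupp : ∀ y ∈ w.support, y ∈ Set.range f) (b : Bool) : cCount G' c' b w.edges ≠ 1 := by
  set w₀ := w.induce (Set.range f) hsupp
  set q := w₀.map f.isoInduceRange.symm.toHom
  have hw₀ : w₀.IsCycle := Walk.IsCycle.of_map (f := (Embedding.induce _).toHom) <| by
    rwa [Walk.map_induce]
  have hq : q.IsCycle :=
    (Walk.isCycle_map_iff_of_injective f.isoInduceRange.symm.injective).mpr hw₀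
  have hedges : (q.map f.toHom).edges = w.edges := by
    have hf : ⇑f.toHom ∘ ⇑f.isoInduceRange.symm.toHom
        = (Embedding.induce (G := G') (Set.range f)).toHom := by
      ext y
      exact Equiv.apply_ofInjective_symm f.injective y
    rw [Walk.edges_map, Walk.edges_map, List.map_map, ← Sym2.map_comp, hf, ← Walk.edges_map,
      Walk.map_induce]
    rfl
  rw [← hedges, cCount_map_edges c b f.toHom hc' q]
  exact hc.cCount_ne_one hq b

section glueTri

variable {G1 : SimpleGraph V} {u v : V}

variable (G1 u v) in
def glueTriEmbedding : G1 ↪g glueTri G1 u v := ⟨Function.Embedding.some, Iff.rfl⟩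

@[simp]
lemma glueTriEmbedding_apply (a : V) : glueTriEmbedding G1 u v a = some a := rfl

lemma mem_range_glueTriEmbedding {z : Option V} :
    z ∈ Set.range (glueTriEmbedding G1 u v) ↔ z ≠ none := by
  cases z <;> simp

lemma glueTri_cCount_ne_one_of_isCycle_none (huv : G1.Adj u v) {c1 : G1.edgeSet → Bool}
    (hc1 : IsNAC G1 c1) {c : (glueTri G1 u v).edgeSet → Bool}
    (hc : ∀ e, c ((glueTriEmbedding G1 u v).toHom.mapEdgeSet e) = c1 e)
    (hnew : ∀ (a : V) (h : (glueTri G1 u v).Adj none (some a)),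
      c ⟨s(none, some a), (glueTri G1 u v).mem_edgeSet.mpr h⟩
        = c1 ⟨s(u, v), G1.mem_edgeSet.mpr huv⟩)
    {w : (glueTri G1 u v).Walk none none} (hw : w.IsCycle) (b : Bool) :
    cCount (glueTri G1 u v) c b w.edges ≠ 1 := by
  set k := c1 ⟨s(u, v), G1.mem_edgeSet.mpr huv⟩
  have hk : ∀ {a a' : V} (h : G1.Adj a a'), s(a, a') = s(u, v) →
      c ⟨s(some a, some a'), (glueTri G1 u v).mem_edgeSet.mpr h⟩ = k :=
    fun {a a'} h he =>
      (hc ⟨s(a, a'), h⟩).trans (congrArg c1 (a₁ := ⟨s(a, a'), h⟩) (Subtype.ext he))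
  obtain ⟨_ | x, _ | y, hx, hy, r, hr, hnr, hxy, hperm⟩ := hw.exists_edges_perm
  · exact hx.elim
  · exact hx.elim
  · exact hy.elim
  have hsxy : s(x, y) = s(u, v) :=
    Sym2.eq_of_ne_mem (fun h => hxy (congrArg some h)) (Sym2.mem_mk_left x y)
      (Sym2.mem_mk_right x y) (Sym2.mem_iff.mpr hx) (Sym2.mem_iff.mpr hy)
  have hadj : G1.Adj x y := by rw [← G1.mem_edgeSet, hsxy]; exact huv
  rw [cCount_perm c b hperm, cCount_cons c b hx, cCount_cons c b hy, hnew x hx, hnew y hy]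
  by_cases htri : s(some x, some y) ∈ r.edges
  · rw [hr.edges_eq_singleton htri, cCount_cons c b hadj, hk hadj hsxy, cCount_nil]
    omega
  · have hyx : (glueTri G1 u v).Adj (some y) (some x) := hadj.symm
    have hcyc : (Walk.cons hyx r).IsCycle :=
      (Walk.cons_isCycle_iff r hyx).mpr ⟨hr, by rwa [Sym2.eq_swap]⟩
    have hnone : none ∉ (Walk.cons hyx r).support := by simpa using hnr
    have hG1 := cCount_ne_one_of_support_subset_range (glueTriEmbedding G1 u v) hc1 hc hcyc
      (fun a ha => mem_range_glueTriEmbedding.mpr (ne_of_mem_of_not_mem ha hnone)) b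
    rw [Walk.edges_cons, cCount_cons c b hyx, hk hadj.symm (Sym2.eq_swap.trans hsxy)]
      at hG1
    omega

end glueTri

end NAC

open NAC in
/-- If `G1` has a NAC-colouring `c1`, then the colouring of the gluing of a triangle to
`G1` along `uv` that agrees with `c1` on `G1` and gives the two new edges the colour of
`uv` is a NAC-colouring. -/
theorem statement7 {V : Type*} (G1 : SimpleGraph V) (u v : V) (huv : G1.Adj u v)
    (c1 : G1.edgeSet → Bool) (hc1 : IsNAC G1 c1)
    (c : (glueTri G1 u v).edgeSet → Bool)
    (hold : ∀ (a b : V) (h : (glueTri G1 u v).Adj (some a) (some b)) (h1 : G1.Adj a b),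
      c ⟨s(some a, some b), (glueTri G1 u v).mem_edgeSet.mpr h⟩
        = c1 ⟨s(a, b), G1.mem_edgeSet.mpr h1⟩)
    (hnew : ∀ (a : V) (h : (glueTri G1 u v).Adj none (some a)),
      c ⟨s(none, some a), (glueTri G1 u v).mem_edgeSet.mpr h⟩
        = c1 ⟨s(u, v), G1.mem_edgeSet.mpr huv⟩) :
    IsNAC (glueTri G1 u v) c := by
  have hc : ∀ e, c ((glueTriEmbedding G1 u v).toHom.mapEdgeSet e) = c1 e := by
    rintro ⟨e, he⟩
    induction e using Sym2.ind with
    | _ a b => exact hold a b he he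
  have hsurj : Function.Surjective (c ∘ (glueTriEmbedding G1 u v).toHom.mapEdgeSet) :=
    (funext hc : c ∘ _ = c1) ▸ hc1.1
  refine ⟨hsurj.of_comp, fun z w hw => ?_⟩
  suffices ∀ b, cCount (glueTri G1 u v) c b w.edges ≠ 1 from ⟨this true, this false⟩
  intro b
  by_cases hn : none ∈ w.support
  · rw [cCount_perm c b (w.rotate_edges none hn).perm.symm]
    exact glueTri_cCount_ne_one_of_isCycle_none huv hc1 hc hnew (hw.rotate hn) b
  · exact cCount_ne_one_of_support_subset_range _ hc1 hc hw
      (fun a ha => mem_range_glueTriEmbedding.mpr (ne_of_mem_of_not_mem ha hn)) b
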